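/- arXiv:2406.06876 — 2 statements merged into one kernel-verified Lean document; each statement's English description precedes it below -/
import Mathlib

section
/- If there is no Type A line, then h_Φ = m/2. Otherwise, max{ h_L : L a Type A line } = h_Φ. -/
open MeasureTheory
open scoped ENNReal

namespace Paper

noncomputable def pev (Φ : MvPolynomial (Fin 2) ℝ) (x : ℝ × ℝ) : ℝ :=
  MvPolynomial.eval ![x.1, x.2] Φ

noncomputable def Hpoly (Φ : MvPolynomial (Fin 2) ℝ) : MvPolynomial (Fin 2) ℝ :=
  MvPolynomial.pderiv 0 (MvPolynomial.pderiv 0 Φ) * MvPolynomial.pderiv 1 (MvPolynomial.pderiv 1 Φ)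
    - MvPolynomial.pderiv 0 (MvPolynomial.pderiv 1 Φ) ^ 2

noncomputable def weight (Φ : MvPolynomial (Fin 2) ℝ) (x : ℝ × ℝ) : ℝ :=
  Real.sqrt (1 + pev (MvPolynomial.pderiv 0 Φ) x ^ 2 + pev (MvPolynomial.pderiv 1 Φ) x ^ 2)

noncomputable def angle2 (x v : ℝ × ℝ) : ℝ :=
  Real.arccos ((x.1 * v.1 + x.2 * v.2)
    / (Real.sqrt (x.1 ^ 2 + x.2 ^ 2) * Real.sqrt (v.1 ^ 2 + v.2 ^ 2)))

def cone (ε lam : ℝ) : Set (ℝ × ℝ) :=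
  {x | x ≠ 0 ∧ (angle2 x (1, lam) < ε ∨ angle2 x (-1, -lam) < ε)}

def euclBall : Set (ℝ × ℝ) := {x | x.1 ^ 2 + x.2 ^ 2 < 1}

noncomputable def MlocSet (Φ : MvPolynomial (Fin 2) ℝ) (c : ℝ) (Ω : Set (ℝ × ℝ))
    (f : (Fin 3 → ℝ) → ℝ) (y : Fin 3 → ℝ) : ℝ :=
  ⨆ t : Set.Icc (1 : ℝ) 2,
    |∫ x in Ω, f (y - (t : ℝ) • ![x.1, x.2, pev Φ x + c]) * weight Φ x|

noncomputable def MlocEta (Φ : MvPolynomial (Fin 2) ℝ) (c : ℝ) (η : ℝ × ℝ → ℝ)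
    (f : (Fin 3 → ℝ) → ℝ) (y : Fin 3 → ℝ) : ℝ :=
  ⨆ t : Set.Icc (1 : ℝ) 2,
    |∫ x : ℝ × ℝ, f (y - (t : ℝ) • ![x.1, x.2, pev Φ x + c]) * η x * weight Φ x|

noncomputable def MglobEta (Φ : MvPolynomial (Fin 2) ℝ) (c : ℝ) (η : ℝ × ℝ → ℝ)
    (f : (Fin 3 → ℝ) → ℝ) (y : Fin 3 → ℝ) : ℝ :=
  ⨆ t : Set.Ioi (0 : ℝ),
    |∫ x : ℝ × ℝ, f (y - (t : ℝ) • ![x.1, x.2, pev Φ x + c]) * η x * weight Φ x|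

def BddLpLq (T : ((Fin 3 → ℝ) → ℝ) → (Fin 3 → ℝ) → ℝ) (p q : ℝ≥0∞) : Prop :=
  ∃ C : ℝ≥0∞, ∀ f : (Fin 3 → ℝ) → ℝ, MemLp f p volume →
    eLpNorm (T f) q volume ≤ C * eLpNorm f p volume

def Delta0 : Set (ℝ × ℝ) :=
  {v | v.1 / 3 < v.2 ∧ v.2 < v.1 ∧ v.1 < 2 / 3 ∧ 2 * v.1 - 1 < v.2}
    ∪ {v | v.1 = v.2 ∧ 0 ≤ v.1 ∧ v.1 < 2 / 3}

noncomputable def linForm (lam : ℝ) : MvPolynomial (Fin 2) ℝ :=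
  MvPolynomial.X 1 - MvPolynomial.C lam * MvPolynomial.X 0

def TypeA (Φ : MvPolynomial (Fin 2) ℝ) (lam : ℝ) : Prop :=
  (∀ x₁ : ℝ, MvPolynomial.eval ![x₁, lam * x₁] (Hpoly Φ) = 0) ∧
  (∀ x₁ : ℝ, x₁ ≠ 0 → MvPolynomial.eval ![x₁, lam * x₁] Φ = 0)

def TypeB (Φ : MvPolynomial (Fin 2) ℝ) (lam : ℝ) : Prop :=
  (∀ x₁ : ℝ, MvPolynomial.eval ![x₁, lam * x₁] (Hpoly Φ) = 0) ∧
  MvPolynomial.eval ![1, lam] Φ ≠ 0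

noncomputable def vertP2 (M : ℕ) : ℝ × ℝ :=
  (((M : ℝ) + 1) / (2 * M), ((M : ℝ) + 1) / (2 * M))

noncomputable def deltaVertices (M : ℕ) : Set (ℝ × ℝ) :=
  if 6 ≤ M then
    {(0, 0), vertP2 M, (4 / ((M : ℝ) + 2), 2 / ((M : ℝ) + 2)),
      (3 / ((M : ℝ) + 2), 1 / ((M : ℝ) + 2))}
  else if M = 5 then
    {(0, 0), vertP2 M,
      ((2 * (M : ℝ) + 4) / (5 * (M : ℝ) + 2), ((M : ℝ) + 2) / (5 * (M : ℝ) + 2)),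
      (1 / 2, ((M : ℝ) - 2) / (2 * ((M : ℝ) + 2))),
      (3 / ((M : ℝ) + 2), 1 / ((M : ℝ) + 2))}
  else if M = 4 then
    {(0, 0), vertP2 M,
      ((2 * (M : ℝ) + 4) / (5 * (M : ℝ) + 2), ((M : ℝ) + 2) / (5 * (M : ℝ) + 2)),
      (3 / ((M : ℝ) + 2), 1 / ((M : ℝ) + 2))}
  else
    {(0, 0), vertP2 M,
      ((2 * (M : ℝ) + 4) / (5 * (M : ℝ) + 2), ((M : ℝ) + 2) / (5 * (M : ℝ) + 2)),
      ((3 * (M : ℝ) + 6) / (8 * (M : ℝ) + 4), ((M : ℝ) + 2) / (8 * (M : ℝ) + 4))}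

noncomputable def DeltaM (M : ℕ) : Set (ℝ × ℝ) :=
  interior (convexHull ℝ (deltaVertices M))
    ∪ {v | ∃ θ : ℝ, 0 ≤ θ ∧ θ < 1 ∧ v = θ • vertP2 M}

noncomputable def pd (i : Fin 2) : MvPolynomial (Fin 2) ℝ → MvPolynomial (Fin 2) ℝ :=
  fun p => MvPolynomial.pderiv i p

noncomputable def orddAt (Φ : MvPolynomial (Fin 2) ℝ) (x : ℝ × ℝ) : ℕ :=
  sInf {j : ℕ | ∃ a b : ℕ, a + b = j ∧
    MvPolynomial.eval ![x.1, x.2] ((pd 0)^[a] ((pd 1)^[b] Φ)) ≠ 0}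

noncomputable def ordd (Φ : MvPolynomial (Fin 2) ℝ) : ℕ :=
  sSup {n : ℕ | ∃ x : ℝ × ℝ, x.1 ^ 2 + x.2 ^ 2 = 1 ∧ orddAt Φ x = n}

noncomputable def heightPhi (Φ : MvPolynomial (Fin 2) ℝ) (m : ℕ) : ℝ :=
  max ((m : ℝ) / 2) (ordd Φ)

def lineSet : Option ℝ → Set (ℝ × ℝ)
  | some l => {x | x.2 = l * x.1}
  | none => {x | x.1 = 0}

noncomputable def lineForm : Option ℝ → MvPolynomial (Fin 2) ℝ
  | some l => MvPolynomial.X 1 - MvPolynomial.C l * MvPolynomial.X 0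
  | none => MvPolynomial.X 0

def basePt : Option ℝ → ℝ × ℝ
  | some l => (1, l)
  | none => (0, 1)

def IsTypeALine (Φ : MvPolynomial (Fin 2) ℝ) (o : Option ℝ) : Prop :=
  (∀ x ∈ lineSet o, pev (Hpoly Φ) x = 0) ∧
  (∀ x ∈ lineSet o, x ≠ 0 → pev Φ x = 0)

def IsTypeBLine (Φ : MvPolynomial (Fin 2) ℝ) (o : Option ℝ) : Prop :=
  (∀ x ∈ lineSet o, pev (Hpoly Φ) x = 0) ∧
  (∀ x ∈ lineSet o, x ≠ 0 → pev Φ x ≠ 0)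

noncomputable def MPhi (Φ : MvPolynomial (Fin 2) ℝ) : ℕ :=
  sSup {n : ℕ | ∃ o : Option ℝ, IsTypeBLine Φ o ∧
    ∃ ω : ℕ, ∃ Q : MvPolynomial (Fin 2) ℝ,
      Hpoly Φ = lineForm o ^ ω * Q ∧ pev Q (basePt o) ≠ 0 ∧ n = ω + 2}

end Paper

open Paper

/-!
For `x` on the unit circle let `L` be the line through `x`, and write `Φ = ℓ ^ n * P` with `ℓ`
the linear form of `L` and `ℓ ∤ P`; by homogeneity `P` then vanishes nowhere on `L ∖ {0}`.
Every derivative of `Φ` of order `< n` is divisible by `ℓ` and so vanishes at `x`, while the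
`n`-th derivative in the variable transverse to `L` is `n! P` modulo `ℓ`. Hence
`ordd Φ(x) = n_L`, and `ordd Φ` is the largest multiplicity of a linear factor of `Φ`.
If `ℓ ^ 2 ∣ Φ`, the Hessian matrix is `2 P (∂ᵢℓ ∂ⱼℓ)` modulo `ℓ`, of rank one, so `ℓ ∣ HΦ`
and `L` is of Type A. So when `ordd Φ ≥ 2` the line realising it is of Type A, and otherwise
`h_Φ` and every `h_L` equal `m / 2`.
-/

namespace Derivation

variable {R A : Type*} [CommRing R] [CommRing A] [Algebra R A] (D E : Derivation R A A)

theorem pow_dvd_of_pow_succ_dvd {ℓ p : A} {n : ℕ} (h : ℓ ^ (n + 1) ∣ p) : ℓ ^ n ∣ D p := by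
  obtain ⟨q, rfl⟩ := h
  rw [leibniz, leibniz_pow]
  refine ⟨ℓ * D q + (n + 1 : ℕ) * q * D ℓ, ?_⟩
  simp only [smul_eq_mul, nsmul_eq_mul, add_tsub_cancel_right]
  ring

theorem pow_dvd_iterate_of_pow_dvd {ℓ p : A} {n : ℕ} (h : ℓ ^ n ∣ p) (j : ℕ) :
    ℓ ^ (n - j) ∣ D^[j] p := by
  induction j with
  | zero => simpa using h
  | succ j ih =>
    rw [Function.iterate_succ_apply']
    rcases Nat.lt_or_ge j n with hj | hj
    · exact D.pow_dvd_of_pow_succ_dvd (by rwa [show n - j = n - (j + 1) + 1 by omega] at ih)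
    · simp [show n - (j + 1) = 0 by omega]

theorem dvd_iterate_pow_mul_sub_factorial_mul {ℓ : A} (hℓ : D ℓ = 1) (n : ℕ) (a : A) :
    ℓ ∣ D^[n] (ℓ ^ n * a) - n.factorial * a := by
  induction n generalizing a with
  | zero => simp
  | succ n ih =>
    have hD : D (ℓ ^ (n + 1) * a) = ℓ ^ n * ((n + 1 : ℕ) * a + ℓ * D a) := by
      rw [leibniz, leibniz_pow, hℓ]
      simp only [smul_eq_mul, nsmul_eq_mul, add_tsub_cancel_right]
      ring
    obtain ⟨b, hb⟩ := ih ((n + 1 : ℕ) * a + ℓ * D a)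
    refine ⟨b + n.factorial * D a, ?_⟩
    rw [Function.iterate_succ_apply, hD, Nat.factorial_succ]
    push_cast at hb ⊢
    linear_combination hb

theorem dvd_apply_apply_sq_mul_sub (ℓ p : A) :
    ℓ ∣ D (E (ℓ ^ 2 * p)) - 2 * D ℓ * E ℓ * p := by
  have hE : E (ℓ ^ 2 * p) = ℓ * (ℓ * E p + 2 * p * E ℓ) := by
    rw [leibniz, leibniz_pow]
    simp only [smul_eq_mul, nsmul_eq_mul]
    push_cast
    ring
  refine ⟨D (ℓ * E p + 2 * p * E ℓ) + D ℓ * E p, ?_⟩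
  rw [hE, leibniz, smul_eq_mul, smul_eq_mul]
  ring

end Derivation

namespace MvPolynomial

variable {σ R : Type*}

theorem IsHomogeneous.eval_smul [CommSemiring R] {P : MvPolynomial σ R} {n : ℕ}
    (hP : P.IsHomogeneous n) (s : R) (v : σ → R) :
    eval (s • v) P = s ^ n * eval v P := by
  rw [eval_eq, eval_eq, Finset.mul_sum]
  refine Finset.sum_congr rfl fun d hd => ?_
  simp only [Pi.smul_apply, smul_eq_mul, mul_pow, Finset.prod_mul_distrib,
    Finset.prod_pow_eq_pow_sum, ← hP.degree_eq_sum_deg_support hd]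
  ring

theorem dvd_sub_aeval [CommRing R] {ℓ : MvPolynomial σ R}
    {g : σ → MvPolynomial σ R} (hg : ∀ i, ℓ ∣ X i - g i) (Q : MvPolynomial σ R) :
    ℓ ∣ Q - aeval g Q := by
  rw [← Ideal.mem_span_singleton, ← Ideal.Quotient.eq]
  have h : Ideal.Quotient.mkₐ R (Ideal.span {ℓ}) = (Ideal.Quotient.mkₐ R _).comp (aeval g) :=
    algHom_ext fun i => by simpa [Ideal.Quotient.eq, Ideal.mem_span_singleton] using hg i
  simpa using congr($h Q)

section
attribute [local instance] gradedAlgebra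

theorem homogeneousComponent_mul_of_isHomogeneous_left [CommSemiring R] {p q : MvPolynomial σ R}
    {i : ℕ} (hp : p.IsHomogeneous i) (j : ℕ) :
    homogeneousComponent (i + j) (p * q) = p * homogeneousComponent j q := by
  rw [← decomposition.decompose'_apply, ← decomposition.decompose'_apply]
  exact DirectSum.coe_decompose_mul_add_of_left_mem (homogeneousSubmodule σ R) hp

theorem IsHomogeneous.of_mul_left [CommRing R] [IsDomain R] {p q : MvPolynomial σ R} {i n : ℕ}
    (hpq : (p * q).IsHomogeneous n) (hp : p.IsHomogeneous i) (hp0 : p ≠ 0) (hq0 : q ≠ 0) :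
    i ≤ n ∧ q.IsHomogeneous (n - i) := by
  have hdeg : ∀ d, coeff d q ≠ 0 → i + d.degree = n := by
    intro d hd
    by_contra hne
    have h := homogeneousComponent_mul_of_isHomogeneous_left (q := q) hp d.degree
    rw [homogeneousComponent_of_mem hpq, if_neg hne, eq_comm, mul_eq_zero] at h
    apply hd
    simpa [coeff_homogeneousComponent] using congr_arg (coeff d) (h.resolve_left hp0)
  obtain ⟨d, hd⟩ := ne_zero_iff.mp hq0
  refine ⟨hdeg d hd ▸ Nat.le_add_right _ _, fun {d} hd => ?_⟩
  rw [Pi.one_def, ← Finsupp.degree_eq_weight_one, ← hdeg d hd, Nat.add_sub_cancel_left]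

end

end MvPolynomial

namespace Paper

open MvPolynomial

theorem basePt_mem_lineSet (o : Option ℝ) : basePt o ∈ lineSet o := by
  cases o <;> simp [basePt, lineSet]

theorem mem_lineSet_iff {o : Option ℝ} {x : ℝ × ℝ} :
    x ∈ lineSet o ↔ ∃ s : ℝ, x = s • basePt o := by
  constructor
  · intro hx
    cases o with
    | none => exact ⟨x.2, Prod.ext (by simpa [basePt, lineSet] using hx) (by simp [basePt])⟩
    | some l =>
      exact ⟨x.1, Prod.ext (by simp [basePt]) (by simpa [basePt, lineSet, mul_comm] using hx)⟩
  · rintro ⟨s, rfl⟩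
    cases o <;> simp [lineSet, basePt, mul_comm]

theorem exists_mem_lineSet (x : ℝ × ℝ) : ∃ o, x ∈ lineSet o := by
  by_cases h : x.1 = 0
  · exact ⟨none, h⟩
  · exact ⟨some (x.2 / x.1), (div_mul_cancel₀ x.2 h).symm⟩

theorem exists_mem_lineSet_sq_add_sq_eq_one (o : Option ℝ) :
    ∃ x ∈ lineSet o, x.1 ^ 2 + x.2 ^ 2 = 1 := by
  cases o with
  | none => exact ⟨(0, 1), rfl, by norm_num⟩
  | some l =>
    have h : 0 < 1 + l ^ 2 := by positivity
    refine ⟨(Real.sqrt (1 + l ^ 2))⁻¹ • (1, l), mem_lineSet_iff.mpr ⟨_, rfl⟩, ?_⟩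
    simp only [Prod.smul_fst, Prod.smul_snd, smul_eq_mul, mul_pow, inv_pow,
      Real.sq_sqrt h.le]
    field_simp

theorem pev_lineForm_of_mem_lineSet {o : Option ℝ} {x : ℝ × ℝ} (hx : x ∈ lineSet o) :
    pev (lineForm o) x = 0 := by
  cases o with
  | none => simpa [pev, lineForm, lineSet] using hx
  | some l => simpa [pev, lineForm, lineSet, sub_eq_zero] using hx

theorem pev_eq_zero_of_lineForm_dvd {o : Option ℝ} {Q : MvPolynomial (Fin 2) ℝ}
    (h : lineForm o ∣ Q) {x : ℝ × ℝ} (hx : x ∈ lineSet o) : pev Q x = 0 := by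
  obtain ⟨R, rfl⟩ := h
  have h0 := pev_lineForm_of_mem_lineSet hx
  simp only [pev, map_mul] at h0 ⊢
  rw [h0, zero_mul]

theorem lineForm_isHomogeneous (o : Option ℝ) : (lineForm o).IsHomogeneous 1 := by
  cases o with
  | none => exact isHomogeneous_X ℝ 0
  | some l => exact (isHomogeneous_X ℝ 1).sub (isHomogeneous_C_mul_X l 0)

def leadIdx : Option ℝ → Fin 2
  | some _ => 1
  | none => 0

theorem pderiv_leadIdx_lineForm (o : Option ℝ) : pderiv (leadIdx o) (lineForm o) = 1 := by
  cases o <;> simp [leadIdx, lineForm]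

theorem lineForm_ne_zero (o : Option ℝ) : lineForm o ≠ 0 := fun h => by
  simpa [h] using pderiv_leadIdx_lineForm o

theorem not_isUnit_lineForm (o : Option ℝ) : ¬ IsUnit (lineForm o) := fun h => by
  have h0 := pev_lineForm_of_mem_lineSet (basePt_mem_lineSet o)
  rw [pev] at h0
  simpa [h0] using h.map (eval ![(basePt o).1, (basePt o).2])

noncomputable def lineSubst : Option ℝ → Fin 2 → MvPolynomial (Fin 2) ℝ
  | some l => ![X 0, C l * X 0]
  | none => ![0, X 1]

theorem lineForm_dvd_X_sub_lineSubst (o : Option ℝ) (i : Fin 2) :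
    lineForm o ∣ X i - lineSubst o i := by
  cases o <;> fin_cases i <;> simp [lineSubst, lineForm]

theorem eval_aeval_lineSubst (o : Option ℝ) (v : Fin 2 → ℝ) (Q : MvPolynomial (Fin 2) ℝ) :
    ∃ x ∈ lineSet o, eval v (aeval (lineSubst o) Q) = pev Q x := by
  have h : eval v (aeval (lineSubst o) Q) = eval (fun i => eval v (lineSubst o i)) Q :=
    eval₂Hom_bind₁ _ _ _ _
  rw [h]
  cases o with
  | none =>
    refine ⟨(0, v 1), rfl, congr_arg (fun w => eval w Q) ?_⟩
    funext i; fin_cases i <;> simp [lineSubst]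
  | some l =>
    refine ⟨(v 0, l * v 0), rfl, congr_arg (fun w => eval w Q) ?_⟩
    funext i; fin_cases i <;> simp [lineSubst]

theorem lineForm_dvd_of_forall_pev_eq_zero {o : Option ℝ} {Q : MvPolynomial (Fin 2) ℝ}
    (h : ∀ x ∈ lineSet o, pev Q x = 0) : lineForm o ∣ Q := by
  have h0 : aeval (lineSubst o) Q = 0 := MvPolynomial.funext fun v => by
    obtain ⟨x, hx, hv⟩ := eval_aeval_lineSubst o v Q
    rw [hv, h x hx, map_zero]
  have h := dvd_sub_aeval (lineForm_dvd_X_sub_lineSubst o) Q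
  rwa [h0, sub_zero] at h

theorem pev_smul_of_isHomogeneous {P : MvPolynomial (Fin 2) ℝ} {n : ℕ} (hP : P.IsHomogeneous n)
    (s : ℝ) (x : ℝ × ℝ) : pev P (s • x) = s ^ n * pev P x := by
  have hv : ![(s • x).1, (s • x).2] = s • ![x.1, x.2] := by
    ext i; fin_cases i <;> simp
  rw [pev, pev, hv, hP.eval_smul]

theorem lineForm_dvd_of_pev_basePt_eq_zero {o : Option ℝ} {P : MvPolynomial (Fin 2) ℝ} {n : ℕ}
    (hP : P.IsHomogeneous n) (hb : pev P (basePt o) = 0) : lineForm o ∣ P :=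
  lineForm_dvd_of_forall_pev_eq_zero fun x hx => by
    obtain ⟨s, rfl⟩ := mem_lineSet_iff.mp hx
    rw [pev_smul_of_isHomogeneous hP, hb, mul_zero]

theorem pev_ne_zero_of_mem_lineSet {o : Option ℝ} {P : MvPolynomial (Fin 2) ℝ} {n : ℕ}
    (hP : P.IsHomogeneous n) (hb : pev P (basePt o) ≠ 0) {x : ℝ × ℝ} (hx : x ∈ lineSet o)
    (hx0 : x ≠ 0) : pev P x ≠ 0 := by
  obtain ⟨s, rfl⟩ := mem_lineSet_iff.mp hx
  have hs : s ≠ 0 := by rintro rfl; simp at hx0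
  rw [pev_smul_of_isHomogeneous hP]
  exact mul_ne_zero (pow_ne_zero n hs) hb

theorem isHomogeneous_of_eq_lineForm_pow_mul {o : Option ℝ} {Φ P : MvPolynomial (Fin 2) ℝ}
    {m n : ℕ} (hΦ : Φ.IsHomogeneous m) (hfac : Φ = lineForm o ^ n * P) (hP : P ≠ 0) :
    n ≤ m ∧ P.IsHomogeneous (m - n) := by
  have hℓ : (lineForm o ^ n).IsHomogeneous n := by simpa using (lineForm_isHomogeneous o).pow n
  exact (hfac ▸ hΦ).of_mul_left hℓ (pow_ne_zero n (lineForm_ne_zero o)) hP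

theorem exists_eq_lineForm_pow_mul {Φ : MvPolynomial (Fin 2) ℝ} {m : ℕ}
    (hΦ : Φ.IsHomogeneous m) (hΦ0 : Φ ≠ 0) (o : Option ℝ) :
    ∃ n P, Φ = lineForm o ^ n * P ∧ pev P (basePt o) ≠ 0 := by
  obtain ⟨P, hfac, hnd⟩ :=
    (FiniteMultiplicity.of_not_isUnit (not_isUnit_lineForm o) hΦ0).exists_eq_pow_mul_and_not_dvd
  have hP0 : P ≠ 0 := by rintro rfl; exact hΦ0 (by simpa using hfac)
  exact ⟨_, P, hfac, fun hb => hnd <|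
    lineForm_dvd_of_pev_basePt_eq_zero (isHomogeneous_of_eq_lineForm_pow_mul hΦ hfac hP0).2 hb⟩

theorem dvd_Hpoly_of_sq_dvd {ℓ Φ : MvPolynomial (Fin 2) ℝ} (h : ℓ ^ 2 ∣ Φ) :
    ℓ ∣ Hpoly Φ := by
  obtain ⟨P, rfl⟩ := h
  have key : ∀ i j, Ideal.Quotient.mk (Ideal.span {ℓ}) (pderiv i (pderiv j (ℓ ^ 2 * P))) =
      Ideal.Quotient.mk (Ideal.span {ℓ}) (2 * pderiv i ℓ * pderiv j ℓ * P) := fun i j =>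
    Ideal.Quotient.eq.mpr (Ideal.mem_span_singleton.mpr
      ((pderiv i).dvd_apply_apply_sq_mul_sub (pderiv j) ℓ P))
  rw [← Ideal.mem_span_singleton, ← Ideal.Quotient.eq_zero_iff_mem, Hpoly, map_sub,
    map_mul, map_pow, key, key, key]
  simp only [map_mul]
  ring

theorem isTypeALine_of_sq_dvd {o : Option ℝ} {Φ : MvPolynomial (Fin 2) ℝ}
    (h : lineForm o ^ 2 ∣ Φ) : IsTypeALine Φ o :=
  ⟨fun _ hx => pev_eq_zero_of_lineForm_dvd (dvd_Hpoly_of_sq_dvd h) hx,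
    fun _ hx _ => pev_eq_zero_of_lineForm_dvd ((dvd_pow_self _ two_ne_zero).trans h) hx⟩

theorem orddAt_eq_of_eq_lineForm_pow_mul {o : Option ℝ} {Φ P : MvPolynomial (Fin 2) ℝ} {n : ℕ}
    (hfac : Φ = lineForm o ^ n * P) {x : ℝ × ℝ} (hx : x ∈ lineSet o) (hPx : pev P x ≠ 0) :
    orddAt Φ x = n := by
  have hlead : pev ((pderiv (leadIdx o))^[n] Φ) x ≠ 0 := by
    have h := (pderiv (leadIdx o)).dvd_iterate_pow_mul_sub_factorial_mul
      (pderiv_leadIdx_lineForm o) n P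
    rw [← hfac] at h
    have h0 := pev_eq_zero_of_lineForm_dvd h hx
    simp only [pev, map_sub, map_mul, map_natCast, sub_eq_zero] at h0 hPx ⊢
    rw [h0]
    exact mul_ne_zero (by positivity) hPx
  refine IsLeast.csInf_eq ⟨?_, ?_⟩
  · cases o with
    | none => exact ⟨n, 0, rfl, hlead⟩
    | some l => exact ⟨0, n, zero_add n, hlead⟩
  · rintro j ⟨a, b, rfl, hne⟩
    by_contra hlt
    have hb := (pderiv 1).pow_dvd_iterate_of_pow_dvd (hfac ▸ dvd_mul_right _ _) b
    have hab := (pderiv 0).pow_dvd_iterate_of_pow_dvd hb a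
    exact hne (pev_eq_zero_of_lineForm_dvd ((dvd_pow_self _ (by omega)).trans hab) hx)

theorem ne_zero_of_pev_ne_zero {P : MvPolynomial (Fin 2) ℝ} {x : ℝ × ℝ} (h : pev P x ≠ 0) :
    P ≠ 0 := by
  rintro rfl
  simp [pev] at h

theorem ne_zero_of_sq_add_sq_eq_one {x : ℝ × ℝ} (h : x.1 ^ 2 + x.2 ^ 2 = 1) : x ≠ 0 := by
  rintro rfl
  norm_num at h

theorem orddAt_eq_of_mem_lineSet {o : Option ℝ} {Φ P : MvPolynomial (Fin 2) ℝ} {m n : ℕ}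
    (hΦ : Φ.IsHomogeneous m) (hfac : Φ = lineForm o ^ n * P) (hP : pev P (basePt o) ≠ 0)
    {x : ℝ × ℝ} (hx : x ∈ lineSet o) (hx0 : x ≠ 0) : orddAt Φ x = n :=
  orddAt_eq_of_eq_lineForm_pow_mul hfac hx <| pev_ne_zero_of_mem_lineSet
    (isHomogeneous_of_eq_lineForm_pow_mul hΦ hfac (ne_zero_of_pev_ne_zero hP)).2 hP hx hx0

theorem bddAbove_orddAt {Φ : MvPolynomial (Fin 2) ℝ} {m : ℕ} (hΦ : Φ.IsHomogeneous m)
    (hΦ0 : Φ ≠ 0) : BddAbove {n : ℕ | ∃ x : ℝ × ℝ, x.1 ^ 2 + x.2 ^ 2 = 1 ∧ orddAt Φ x = n} := by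
  refine ⟨m, ?_⟩
  rintro _ ⟨x, hx1, rfl⟩
  obtain ⟨o, hx⟩ := exists_mem_lineSet x
  obtain ⟨n, P, hfac, hP⟩ := exists_eq_lineForm_pow_mul hΦ hΦ0 o
  rw [orddAt_eq_of_mem_lineSet hΦ hfac hP hx (ne_zero_of_sq_add_sq_eq_one hx1)]
  exact (isHomogeneous_of_eq_lineForm_pow_mul hΦ hfac (ne_zero_of_pev_ne_zero hP)).1

theorem le_ordd_of_eq_lineForm_pow_mul {o : Option ℝ} {Φ P : MvPolynomial (Fin 2) ℝ} {m n : ℕ}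
    (hΦ : Φ.IsHomogeneous m) (hfac : Φ = lineForm o ^ n * P) (hP : pev P (basePt o) ≠ 0) :
    n ≤ ordd Φ := by
  have hΦ0 : Φ ≠ 0 :=
    hfac ▸ mul_ne_zero (pow_ne_zero n (lineForm_ne_zero o)) (ne_zero_of_pev_ne_zero hP)
  obtain ⟨x, hx, hx1⟩ := exists_mem_lineSet_sq_add_sq_eq_one o
  exact le_csSup (bddAbove_orddAt hΦ hΦ0)
    ⟨x, hx1, orddAt_eq_of_mem_lineSet hΦ hfac hP hx (ne_zero_of_sq_add_sq_eq_one hx1)⟩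

theorem exists_eq_lineForm_pow_ordd_mul {Φ : MvPolynomial (Fin 2) ℝ} {m : ℕ}
    (hΦ : Φ.IsHomogeneous m) (hΦ0 : Φ ≠ 0) :
    ∃ o P, Φ = lineForm o ^ ordd Φ * P ∧ pev P (basePt o) ≠ 0 := by
  have hbdd := bddAbove_orddAt hΦ hΦ0
  obtain ⟨x, hx1, hx⟩ := Nat.sSup_mem (by exact ⟨_, (1, 0), by norm_num, rfl⟩) hbdd
  obtain ⟨o, hxo⟩ := exists_mem_lineSet x
  obtain ⟨n, P, hfac, hP⟩ := exists_eq_lineForm_pow_mul hΦ hΦ0 o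
  refine ⟨o, P, ?_, hP⟩
  rwa [ordd, ← hx, orddAt_eq_of_mem_lineSet hΦ hfac hP hxo (ne_zero_of_sq_add_sq_eq_one hx1)]

theorem max_half_eq_half {m n : ℕ} (hm : 2 ≤ m) (hn : n ≤ 1) :
    max ((m : ℝ) / 2) n = m / 2 := by
  have hm' : (2 : ℝ) ≤ m := by exact_mod_cast hm
  have hn' : (n : ℝ) ≤ 1 := by exact_mod_cast hn
  exact max_eq_left (by linarith)

end Paper

/-- Proposition 1.4: if there is no Type A line then `h_Φ = m/2`;
otherwise `max { h_L : L a Type A line } = h_Φ`. -/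
theorem typeA_heights_eq_height
    (Φ : MvPolynomial (Fin 2) ℝ) (m : ℕ) (hm : 2 ≤ m)
    (hhom : Φ.IsHomogeneous m) (hH : Hpoly Φ ≠ 0) :
    ((¬ ∃ o : Option ℝ, IsTypeALine Φ o) → heightPhi Φ m = (m : ℝ) / 2) ∧
    ((∃ o : Option ℝ, IsTypeALine Φ o) →
      IsGreatest
        {h : ℝ | ∃ o : Option ℝ, IsTypeALine Φ o ∧
          ∃ n : ℕ, ∃ P : MvPolynomial (Fin 2) ℝ,
            Φ = lineForm o ^ n * P ∧ pev P (basePt o) ≠ 0 ∧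
            h = max ((m : ℝ) / 2) (n : ℝ)}
        (heightPhi Φ m)) := by
  have hΦ0 : Φ ≠ 0 := by
    rintro rfl
    exact hH (by simp [Hpoly])
  obtain ⟨o, P, hfac, hP⟩ := exists_eq_lineForm_pow_ordd_mul hhom hΦ0
  have hA : 2 ≤ ordd Φ → IsTypeALine Φ o := fun h =>
    isTypeALine_of_sq_dvd (hfac ▸ (pow_dvd_pow _ h).mul_right P)
  refine ⟨fun hno => max_half_eq_half hm ?_, fun ⟨o₀, hA₀⟩ => ⟨?_, ?_⟩⟩
  · by_contra h
    exact hno ⟨o, hA (by omega)⟩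
  · by_cases h : 2 ≤ ordd Φ
    · exact ⟨o, hA h, _, P, hfac, hP, rfl⟩
    · obtain ⟨n₀, P₀, hfac₀, hP₀⟩ := exists_eq_lineForm_pow_mul hhom hΦ0 o₀
      refine ⟨o₀, hA₀, n₀, P₀, hfac₀, hP₀, ?_⟩
      have hn₀ : n₀ ≤ 1 := (le_ordd_of_eq_lineForm_pow_mul hhom hfac₀ hP₀).trans (by omega)
      rw [heightPhi, max_half_eq_half hm (by omega), max_half_eq_half hm hn₀]
  · rintro _ ⟨o', -, n', P', hfac', hP', rfl⟩
    exact max_le_max le_rfl (by exact_mod_cast le_ordd_of_eq_lineForm_pow_mul hhom hfac' hP')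
end

section
/- If λ ∈ ℝ is such that Γ(λ) is of Type B, then ω_λ + 2 ≤ m; that is, M^λ ≤ m. -/
open MeasureTheory
open scoped ENNReal

open Paper

/-!
Restrict to the line `x₁ = 1`, centred at `(1, λ)`: put `f(t) = Φ(1, λ + t)`, so that
`f(0) = Φ(1, λ) ≠ 0`, `deg f ≤ m`, and `HΦ(1, λ + t) = t^ω Q(1, λ + t)` vanishes to order exactly
`ω` at `t = 0`. Euler's identity turns `x₁² HΦ` into `(m - 1) (m Φ ∂₂₂Φ - (m - 1) (∂₂Φ)²)`, so
`HΦ(1, λ + t) = (m - 1) (m f f'' - (m - 1) f'²)`. If this vanished to order `m - 1`, comparing `f`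
with the solution `f(0) (1 + a t)^m` of `m f f'' = (m - 1) f'²` with the same first jet would show,
by a degree count, that `f` is that solution; then `HΦ` would vanish on the whole line,
contradicting `Q(1, λ) ≠ 0`.
-/

namespace MvPolynomial

theorem pderiv_comm {σ R : Type*} [CommRing R] (i j : σ) (p : MvPolynomial σ R) :
    pderiv i (pderiv j p) = pderiv j (pderiv i p) := by
  have h : ⁅(pderiv i : Derivation R (MvPolynomial σ R) (MvPolynomial σ R)), pderiv j⁆
      = (0 : Derivation R (MvPolynomial σ R) (MvPolynomial σ R)) := by
    refine derivation_ext fun k => ?_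
    classical
    simp [Derivation.commutator_apply, pderiv_X, Pi.single_apply, apply_ite]
  simpa [Derivation.commutator_apply, sub_eq_zero] using congr($h p)

theorem natDegree_aeval_le_totalDegree {σ R : Type*} [CommSemiring R] {g : σ → Polynomial R}
    (hg : ∀ i, (g i).natDegree ≤ 1) (p : MvPolynomial σ R) :
    (aeval g p).natDegree ≤ p.totalDegree := by
  conv_lhs => rw [p.as_sum, map_sum]
  refine Polynomial.natDegree_sum_le_of_forall_le _ _ fun d hd => ?_
  rw [aeval_monomial, Finsupp.prod]
  refine (Polynomial.natDegree_C_mul_le _ _).trans <| (Polynomial.natDegree_prod_le _ _).trans ?_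
  refine le_trans (Finset.sum_le_sum fun i _ => ?_) (le_totalDegree hd)
  exact Polynomial.natDegree_pow_le.trans (by simpa using Nat.mul_le_mul_left (d i) (hg i))

end MvPolynomial

namespace Polynomial

theorem X_pow_succ_dvd_of_X_pow_dvd_derivative {R : Type*} [Semiring R] [NoZeroDivisors R]
    [CharZero R] {p : R[X]} {k : ℕ} (h0 : p.coeff 0 = 0) (h : X ^ k ∣ derivative p) :
    X ^ (k + 1) ∣ p := by
  rw [X_pow_dvd_iff] at h ⊢
  rintro (_ | j) hj
  · exact h0
  · simpa [coeff_derivative, Nat.cast_add_one_ne_zero] using h j (by omega)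

variable {K : Type*} [Field K]

/-- For `f` of degree at most `m`, the Hessian of its degree-`m` homogenization `x^m f(y / x)` at
`(1, t)` is `(m - 1) * lineHessian m f`. -/
noncomputable def lineHessian (m : ℕ) (f : K[X]) : K[X] :=
  (m : K[X]) * f * derivative (derivative f) - ((m - 1 : ℕ) : K[X]) * derivative f ^ 2

/-- `powerDefect m a f = 0` is the first-order equation `(1 + a t) f' = m a f` of the multiples of
`(1 + a t) ^ m`. -/
noncomputable def powerDefect (m : ℕ) (a : K) (f : K[X]) : K[X] :=
  C a * (X * derivative f) + derivative f - C (m * a) * f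

theorem mul_derivative_powerDefect (n : ℕ) (a : K) (f : K[X]) :
    ((n + 1 : ℕ) : K[X]) * f * derivative (powerDefect (n + 1) a f)
      = (n : K[X]) * derivative f * powerDefect (n + 1) a f
        + (C a * X + 1) * lineHessian (n + 1) f := by
  simp only [powerDefect, lineHessian, derivative_sub, derivative_mul, derivative_C,
    derivative_X, derivative_natCast, derivative_one, Nat.add_sub_cancel, map_mul, map_add,
    map_natCast, map_one, Nat.cast_add, Nat.cast_one]
  ring

theorem coeff_powerDefect_zero (m : ℕ) (a : K) (f : K[X]) :
    (powerDefect m a f).coeff 0 = f.coeff 1 - m * a * f.coeff 0 := by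
  simp [powerDefect, coeff_derivative]

theorem coeff_powerDefect_succ (m : ℕ) (a : K) (f : K[X]) (j : ℕ) :
    (powerDefect m a f).coeff (j + 1)
      = (j + 1 - m) * a * f.coeff (j + 1) + (j + 2) * f.coeff (j + 2) := by
  simp only [powerDefect, coeff_add, coeff_sub, coeff_C_mul, coeff_X_mul, coeff_derivative]
  push_cast
  ring

theorem powerDefect_eq_zero_of_X_pow_dvd {n : ℕ} {a : K} {f : K[X]}
    (hdeg : f.natDegree ≤ n + 1) (h : X ^ (n + 1) ∣ powerDefect (n + 1) a f) :
    powerDefect (n + 1) a f = 0 := by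
  ext k
  rcases lt_or_ge k (n + 1) with hk | hk
  · exact X_pow_dvd_iff.mp h k hk
  obtain ⟨j, rfl⟩ : ∃ j, k = j + 1 := ⟨k - 1, by omega⟩
  rw [coeff_powerDefect_succ, coeff_zero,
    coeff_eq_zero_of_natDegree_lt (by omega : f.natDegree < j + 2)]
  rcases eq_or_lt_of_le (show n ≤ j by omega) with rfl | hj
  · simp
  · simp [coeff_eq_zero_of_natDegree_lt (by omega : f.natDegree < j + 1)]

theorem lineHessian_eq_zero_of_X_pow_dvd [CharZero K] {m : ℕ} {f : K[X]}
    (hdeg : f.natDegree ≤ m) (hf0 : f.eval 0 ≠ 0) (h : X ^ (m - 1) ∣ lineHessian m f) :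
    lineHessian m f = 0 := by
  obtain _ | n := m
  · simp [lineHessian]
  rw [← coeff_zero_eq_eval_zero] at hf0
  rw [Nat.add_sub_cancel] at h
  set a := f.coeff 1 / ((n + 1) * f.coeff 0) with ha
  set V := powerDefect (n + 1) a f
  have hV0 : V.coeff 0 = 0 := by
    rw [coeff_powerDefect_zero, ha]
    field_simp
    push_cast
    ring
  -- `mul_derivative_powerDefect` lifts `X ^ k ∣ V` to `X ^ k ∣ V'` while `k ≤ n`.
  have hVdvd : ∀ k ≤ n + 1, X ^ k ∣ V := by
    intro k hk
    induction k with
    | zero => simp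
    | succ k ih =>
      refine X_pow_succ_dvd_of_X_pow_dvd_derivative hV0 ?_
      have hrhs : X ^ k ∣ ((n + 1 : ℕ) : K[X]) * f * derivative V := by
        rw [mul_derivative_powerDefect]
        exact dvd_add (dvd_mul_of_dvd_right (ih (by omega)) _)
          (dvd_mul_of_dvd_right ((pow_dvd_pow X (by omega)).trans h) _)
      refine prime_X.pow_dvd_of_dvd_mul_left k ?_ hrhs
      rw [X_dvd_iff]
      simpa [Nat.cast_add_one_ne_zero] using hf0
  have hVzero : V = 0 := powerDefect_eq_zero_of_X_pow_dvd hdeg (hVdvd (n + 1) le_rfl)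
  have hP : C a * X + 1 ≠ 0 := fun h0 => by simpa using congr_arg (coeff · 0) h0
  simpa [V, hVzero, hP] using (mul_derivative_powerDefect n a f).symm

end Polynomial

section LineRestriction

open MvPolynomial

variable {R : Type*} [CommRing R]

/-- `lineRestrict lam p` is `t ↦ p (1, lam + t)`, so the point `(1, lam)` of `L_lam` sits at
`t = 0`. -/
noncomputable def lineRestrict (lam : R) : MvPolynomial (Fin 2) R →ₐ[R] Polynomial R :=
  aeval ![1, Polynomial.C lam + Polynomial.X]

@[simp]
theorem lineRestrict_X_zero (lam : R) : lineRestrict lam (X 0) = 1 := by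
  simp [lineRestrict]

theorem lineRestrict_pderiv_one (lam : R) (p : MvPolynomial (Fin 2) R) :
    lineRestrict lam (pderiv 1 p) = Polynomial.derivative (lineRestrict lam p) := by
  induction p using MvPolynomial.induction_on with
  | C a => simp [lineRestrict]
  | add p q hp hq => simp only [map_add, hp, hq]
  | mul_X p i hp =>
    rw [pderiv_mul, map_add, map_mul, map_mul, hp, map_mul, Polynomial.derivative_mul]
    fin_cases i <;> simp [lineRestrict]

theorem lineRestrict_eval_zero (lam : R) (p : MvPolynomial (Fin 2) R) :
    (lineRestrict lam p).eval 0 = eval ![1, lam] p := by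
  rw [lineRestrict, ← Polynomial.coe_aeval_eq_eval, ← AlgHom.comp_apply, comp_aeval,
    aeval_eq_eval]
  congr
  funext i
  fin_cases i <;> simp

theorem natDegree_lineRestrict_le (lam : R) {m : ℕ} {p : MvPolynomial (Fin 2) R}
    (hp : p.IsHomogeneous m) : (lineRestrict lam p).natDegree ≤ m := by
  refine (natDegree_aeval_le_totalDegree (fun i => ?_) p).trans hp.totalDegree_le
  fin_cases i
  · simp
  · exact (Polynomial.natDegree_add_le _ _).trans (by simp [Polynomial.natDegree_X_le])

end LineRestriction

theorem lineRestrict_linForm (lam : ℝ) : lineRestrict lam (linForm lam) = Polynomial.X := by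
  simp [lineRestrict, linForm]

section Hessian

open MvPolynomial

theorem X_zero_sq_mul_Hpoly {m : ℕ} {Φ : MvPolynomial (Fin 2) ℝ} (hΦ : Φ.IsHomogeneous m) :
    X 0 ^ 2 * Hpoly Φ = ((m - 1 : ℕ) : MvPolynomial (Fin 2) ℝ) *
      ((m : MvPolynomial (Fin 2) ℝ) * Φ * pderiv 1 (pderiv 1 Φ)
        - ((m - 1 : ℕ) : MvPolynomial (Fin 2) ℝ) * pderiv 1 Φ ^ 2) := by
  have e := hΦ.sum_X_mul_pderiv
  have e0 := (hΦ.pderiv (i := 0)).sum_X_mul_pderiv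
  have e1 := (hΦ.pderiv (i := 1)).sum_X_mul_pderiv
  simp only [Fin.sum_univ_two, nsmul_eq_mul] at e e0 e1
  rw [pderiv_comm 1 0] at e0
  rw [Hpoly]
  linear_combination (X 0 * pderiv 1 (pderiv 1 Φ)) * e0
    + (((m - 1 : ℕ) : MvPolynomial (Fin 2) ℝ) * pderiv 1 (pderiv 1 Φ)) * e
    - (X 0 * pderiv 0 (pderiv 1 Φ) + ((m - 1 : ℕ) : MvPolynomial (Fin 2) ℝ) * pderiv 1 Φ) * e1

end Hessian

section HessianOnLine

open Polynomial

theorem lineRestrict_Hpoly (lam : ℝ) {m : ℕ} {Φ : MvPolynomial (Fin 2) ℝ}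
    (hΦ : Φ.IsHomogeneous m) :
    lineRestrict lam (Hpoly Φ) = ((m - 1 : ℕ) : ℝ[X]) * lineHessian m (lineRestrict lam Φ) := by
  simpa [lineHessian, lineRestrict_pderiv_one]
    using congr(lineRestrict lam $(X_zero_sq_mul_Hpoly hΦ))

theorem lineRestrict_Hpoly_eq_zero_of_X_pow_dvd (lam : ℝ) {m : ℕ} {Φ : MvPolynomial (Fin 2) ℝ}
    (hΦ : Φ.IsHomogeneous m) (hΦ0 : MvPolynomial.eval ![1, lam] Φ ≠ 0)
    (h : X ^ (m - 1) ∣ lineRestrict lam (Hpoly Φ)) : lineRestrict lam (Hpoly Φ) = 0 := by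
  rw [lineRestrict_Hpoly lam hΦ, ← C_eq_natCast] at h ⊢
  rcases eq_or_ne ((m - 1 : ℕ) : ℝ) 0 with hm | hm
  · rw [hm, C_0, zero_mul]
  have hf0 : (lineRestrict lam Φ).eval 0 ≠ 0 := by rwa [lineRestrict_eval_zero]
  rw [dvd_C_mul hm] at h
  rw [lineHessian_eq_zero_of_X_pow_dvd (natDegree_lineRestrict_le lam hΦ) hf0 h, mul_zero]

end HessianOnLine

theorem typeB_M_le_m_general
    (Φ : MvPolynomial (Fin 2) ℝ) (m : ℕ)
    (hhom : Φ.IsHomogeneous m)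
    (lam : ℝ) (hB : TypeB Φ lam)
    (ω : ℕ) (Q : MvPolynomial (Fin 2) ℝ)
    (hfac : Hpoly Φ = linForm lam ^ ω * Q)
    (hQ : MvPolynomial.eval ![1, lam] Q ≠ 0) :
    ω + 2 ≤ m := by
  by_contra! hlt
  have hHQ : lineRestrict lam (Hpoly Φ) = Polynomial.X ^ ω * lineRestrict lam Q := by
    rw [hfac, map_mul, map_pow, lineRestrict_linForm]
  have hQ0 : lineRestrict lam Q ≠ 0 := fun h =>
    hQ (by rw [← lineRestrict_eval_zero, h, Polynomial.eval_zero])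
  refine mul_ne_zero (pow_ne_zero ω Polynomial.X_ne_zero) hQ0 ?_
  rw [← hHQ]
  refine lineRestrict_Hpoly_eq_zero_of_X_pow_dvd lam hhom hB.2 ?_
  rw [hHQ]
  exact dvd_mul_of_dvd_left (pow_dvd_pow _ (by omega)) _

/-- Remark 1.10 / inequality (4.14): for a Type B line,
`M^λ = ω_λ + 2 ≤ m`. -/
theorem typeB_M_le_m
    (Φ : MvPolynomial (Fin 2) ℝ) (m : ℕ) (hm : 2 ≤ m)
    (hhom : Φ.IsHomogeneous m) (hH : Hpoly Φ ≠ 0)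
    (lam : ℝ) (hB : TypeB Φ lam)
    (ω : ℕ) (Q : MvPolynomial (Fin 2) ℝ)
    (hfac : Hpoly Φ = linForm lam ^ ω * Q)
    (hQ : MvPolynomial.eval ![1, lam] Q ≠ 0) :
    ω + 2 ≤ m :=
  typeB_M_le_m_general Φ m hhom lam hB ω Q hfac hQ
end
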